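/- arXiv:1907.10504 — 2 statements merged into one kernel-verified Lean document; each statement's English description precedes it below -/
import Mathlib

section
/- (Eggbox Lemma) Let M be an orbit-finite monoid and let x, y ∈ M. If x and x·y are J-equivalent, then x and x·y are R-equivalent. Similarly, if y and x·y are J-equivalent, then y and x·y are L-equivalent. -/
/-- Atoms: a fixed countably infinite set. -/
abbrev Atom : Type := ℕ

/-- Atom automorphisms: bijections of the atoms. -/
abbrev AtomPerm : Type := Equiv.Perm Atom

/-- `x` (in a set with atoms `X`) is supported by the finite set `A` of atoms. -/
def SupportedBy {X : Type*} [MulAction AtomPerm X] (A : Finset Atom) (x : X) : Prop :=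
  ∀ π : AtomPerm, (∀ a ∈ A, π a = a) → π • x = x

def FinitelySupported {X : Type*} [MulAction AtomPerm X] (x : X) : Prop :=
  ∃ A : Finset Atom, SupportedBy A x

def IsLeastSupport {X : Type*} [MulAction AtomPerm X] (A : Finset Atom) (x : X) : Prop :=
  SupportedBy A x ∧ ∀ B : Finset Atom, SupportedBy B x → A ⊆ B

/-- A function `f : X → Y` is supported by `A` if `f (π • x) = π • f x`
for every `A`-automorphism `π`. -/
def FunSupportedBy {X Y : Type*} [MulAction AtomPerm X] [MulAction AtomPerm Y]
    (A : Finset Atom) (f : X → Y) : Prop :=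
  ∀ π : AtomPerm, (∀ a ∈ A, π a = a) → ∀ x : X, f (π • x) = π • f x

/-- A function is equivariant if it commutes with all atom automorphisms. -/
def FunEquivariant {X Y : Type*} [MulAction AtomPerm X] [MulAction AtomPerm Y]
    (f : X → Y) : Prop :=
  ∀ (π : AtomPerm) (x : X), f (π • x) = π • f x

/-- A subset `S` of a set with atoms is supported by `A`
(as an element of the powerset with the induced action). -/
def SetSupportedBy {Z : Type*} [MulAction AtomPerm Z] (A : Finset Atom) (S : Set Z) : Prop :=
  ∀ π : AtomPerm, (∀ a ∈ A, π a = a) → ∀ z : Z, z ∈ S ↔ π • z ∈ S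

/-- A set with atoms is orbit-finite if every element is finitely supported and, for some
finite set `A` of atoms, it is a union of finitely many orbits of the group of
`A`-automorphisms. -/
def OrbitFinite (X : Type*) [MulAction AtomPerm X] : Prop :=
  (∀ x : X, FinitelySupported x) ∧
  ∃ (A : Finset Atom) (reps : Finset X),
    ∀ x : X, ∃ r ∈ reps, ∃ π : AtomPerm, (∀ a ∈ A, π a = a) ∧ π • r = x

/-- The multiplication of a monoid with atoms is finitely supported. -/
def MulFinitelySupported (M : Type*) [Monoid M] [MulAction AtomPerm M] : Prop :=
  ∃ A : Finset Atom, ∀ π : AtomPerm, (∀ a ∈ A, π a = a) →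
    ∀ x y : M, π • (x * y) = (π • x) * (π • y)

/-- An orbit-finite monoid: the underlying set is orbit-finite and
multiplication is finitely supported. -/
def OrbitFiniteMonoid (M : Type*) [Monoid M] [MulAction AtomPerm M] : Prop :=
  OrbitFinite M ∧ MulFinitelySupported M

/-- `x` is an infix of `y`. -/
def MInfix {M : Type*} [Monoid M] (x y : M) : Prop := ∃ a b : M, y = a * x * b

/-- `x` is a prefix of `y`. -/
def MPrefix {M : Type*} [Monoid M] (x y : M) : Prop := ∃ a : M, y = x * a

/-- `x` is a suffix of `y`. -/
def MSuffix {M : Type*} [Monoid M] (x y : M) : Prop := ∃ a : M, y = a * x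

def JEquiv {M : Type*} [Monoid M] (x y : M) : Prop := MInfix x y ∧ MInfix y x
def REquiv {M : Type*} [Monoid M] (x y : M) : Prop := MPrefix x y ∧ MPrefix y x
def LEquiv {M : Type*} [Monoid M] (x y : M) : Prop := MSuffix x y ∧ MSuffix y x

/-- A sequence of monoid elements is smooth if every element of the sequence can be
recovered from the product of the whole sequence by multiplying on both sides. -/
def SmoothSeq {M : Type*} [Monoid M] (l : List M) : Prop :=
  ∀ x ∈ l, ∃ y z : M, y * l.prod * z = x


/-!
Every element of an orbit-finite set with atoms is supported by a finite set `B`, and the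
elements of its orbit are then determined by where a permutation sends `B`. Normalising that
permutation by one fixing `A`, so that it sends `B` into `A` together with `#B` fresh atoms,
shows that only finitely many elements are supported by a given finite `A`. The positive
powers of any `u` in an orbit-finite monoid are all supported by one finite set, so
`u ^ (i + p) = u ^ i` for some `i` and `p > 0`.

In a monoid with this property, `x = a * (x * y) * b` gives `x = a ^ n * x * (y * b) ^ n` for
all `n`, hence `x = x * (y * b) ^ p`, which exhibits `x` as a prefix of `x * y`. The statement
about `L` is the same argument in the opposite monoid.
-/

open Finset MulOpposite

section Permutations

variable {α : Type*} [DecidableEq α]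

theorem exists_perm_mapsTo_of_disjoint {s t : Finset α} (hst : Disjoint s t)
    (hcard : #s = #t) :
    ∃ τ : Equiv.Perm α, (∀ n, n ∉ s → n ∉ t → τ n = n) ∧ ∀ n ∈ s, τ n ∈ t := by
  let e := Finset.equivOfCardEq hcard
  let g : α → α := fun n =>
    if h : n ∈ s then e ⟨n, h⟩ else if h : n ∈ t then e.symm ⟨n, h⟩ else n
  have hg : Function.Involutive g := by
    intro n
    by_cases hs : n ∈ s
    · have hns : (e ⟨n, hs⟩ : α) ∉ s := disjoint_right.1 hst (e ⟨n, hs⟩).2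
      simp [g, hs, hns]
    · by_cases ht : n ∈ t <;> simp [g, hs, ht]
  exact ⟨hg.toPerm g, fun n hs ht => by simp [g, hs, ht], fun n hn => by simp [g, hn]⟩

theorem exists_perm_fixing_mapsTo_union {A D S : Finset α} (hDA : Disjoint D A)
    (hcard : #S ≤ #D) :
    ∃ τ : Equiv.Perm α, (∀ a ∈ A, τ a = a) ∧ ∀ b ∈ S, τ b ∈ A ∪ D := by
  -- `τ` swaps the elements of `S` outside `A ∪ D` with elements of `D` outside `S`.
  set E := S \ (A ∪ D)
  have hE : #E ≤ #(D \ S) := by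
    have hES : #E ≤ #(S \ D) := card_le_card (sdiff_subset_sdiff le_rfl subset_union_right)
    have hS := card_sdiff_add_card_inter S D
    have hD := card_sdiff_add_card_inter D S
    rw [inter_comm] at hD
    omega
  obtain ⟨t, htD, htE⟩ := exists_subset_card_eq hE
  have hEt : Disjoint E t := disjoint_left.2 fun n hnE hnt =>
    (mem_sdiff.1 hnE).2 (mem_union_right _ (mem_sdiff.1 (htD hnt)).1)
  obtain ⟨τ, hτ_fix, hτ_maps⟩ := exists_perm_mapsTo_of_disjoint hEt htE.symm
  refine ⟨τ, fun a ha => hτ_fix a (fun h => (mem_sdiff.1 h).2 (mem_union_left _ ha))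
    fun h => disjoint_left.1 hDA (mem_sdiff.1 (htD h)).1 ha, fun b hb => ?_⟩
  by_cases hAD : b ∈ A ∪ D
  · rwa [hτ_fix b (fun h => (mem_sdiff.1 h).2 hAD) fun h => (mem_sdiff.1 (htD h)).2 hb]
  · exact mem_union_right _ (mem_sdiff.1 (htD (hτ_maps b (mem_sdiff.2 ⟨hb, hAD⟩)))).1

end Permutations

section Supports

variable {X : Type*} [MulAction AtomPerm X]

theorem SupportedBy.smul_eq_smul {B : Finset Atom} {r : X} (hr : SupportedBy B r)
    {σ τ : AtomPerm} (h : ∀ b ∈ B, σ b = τ b) : σ • r = τ • r := by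
  have hfix : (τ⁻¹ * σ) • r = r := hr _ fun b hb => by simp [h b hb]
  rw [← mul_inv_cancel_left τ σ, mul_smul, hfix]

theorem SupportedBy.finite_supportedBy_inter_orbit {B : Finset Atom} {r : X}
    (hr : SupportedBy B r) (A : Finset Atom) :
    {x | SupportedBy A x ∧ x ∈ MulAction.orbit AtomPerm r}.Finite := by
  obtain ⟨D, hDA, hD⟩ : ∃ D : Finset Atom, Disjoint D A ∧ #D = #B := by
    obtain ⟨D, hD, hcard⟩ := A.finite_toSet.infinite_compl.exists_subset_card_eq #B
    exact ⟨D, disjoint_left.2 fun a ha => hD ha, hcard⟩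
  set S := {x | SupportedBy A x ∧ x ∈ MulAction.orbit AtomPerm r}
  have hnormal : ∀ x ∈ S, ∃ σ : AtomPerm, σ • r = x ∧ ∀ b ∈ B, σ b ∈ A ∪ D := by
    rintro x ⟨hxA, π, rfl⟩
    obtain ⟨τ, hτA, hτB⟩ :=
      exists_perm_fixing_mapsTo_union (S := B.image π) hDA (card_image_le.trans hD.ge)
    exact ⟨τ * π, by rw [mul_smul, hxA τ hτA], fun b hb => hτB _ (mem_image_of_mem π hb)⟩
  choose σ hσr hσB using fun x : S => hnormal x x.2
  have : Finite S := Finite.of_injective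
    (fun x (b : B) => (⟨σ x b, hσB x b b.2⟩ : (A ∪ D : Finset Atom))) fun x x' hxx' =>
      Subtype.ext <| by
        rw [← hσr x, ← hσr x', hr.smul_eq_smul fun b hb => congrArg Subtype.val (congrFun hxx' ⟨b, hb⟩)]
  exact Set.toFinite S

theorem OrbitFinite.finite_supportedBy (h : OrbitFinite X) (A : Finset Atom) :
    {x : X | SupportedBy A x}.Finite := by
  obtain ⟨hfs, _, reps, hreps⟩ := h
  refine (reps.finite_toSet.biUnion fun r _ =>
    (hfs r).choose_spec.finite_supportedBy_inter_orbit A).subset fun x hx => ?_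
  obtain ⟨r, hr, π, -, rfl⟩ := hreps x
  exact Set.mem_biUnion hr ⟨hx, π, rfl⟩

end Supports

theorem OrbitFiniteMonoid.exists_pow_add_eq_pow {M : Type*} [Monoid M] [MulAction AtomPerm M]
    (hM : OrbitFiniteMonoid M) (u : M) : ∃ i p : ℕ, 0 < p ∧ u ^ (i + p) = u ^ i := by
  obtain ⟨hOF, Am, hmul⟩ := hM
  obtain ⟨Au, hu⟩ := hOF.1 u
  have hpow : ∀ n : ℕ, SupportedBy (Am ∪ Au) (u ^ (n + 1)) := by
    intro n π hπ
    have hπu := hu π fun a ha => hπ a (mem_union_right _ ha)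
    induction n with
    | zero => simpa using hπu
    | succ n ih => rw [pow_succ, hmul π (fun a ha => hπ a (mem_union_left _ ha)), ih, hπu]
  obtain ⟨m, n, hmn, h⟩ :=
    (hOF.finite_supportedBy (Am ∪ Au)).exists_lt_map_eq_of_forall_mem hpow
  exact ⟨m + 1, n - m, by omega, by rw [show m + 1 + (n - m) = n + 1 by omega, h]⟩

section Green

variable {M : Type*} [Monoid M]

theorem eq_mul_pow_of_eq_mul_mul {a x u : M} (h : x = a * x * u) {i p : ℕ}
    (hu : u ^ (i + p) = u ^ i) : x = x * u ^ p := by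
  have hn : ∀ n : ℕ, x = a ^ n * x * u ^ n := by
    intro n
    induction n with
    | zero => simp
    | succ n ih =>
      calc x = a * (a ^ n * x * u ^ n) * u := by rw [← ih, ← h]
        _ = a ^ (n + 1) * x * u ^ (n + 1) := by
          rw [pow_succ', pow_succ]; simp only [mul_assoc]
  calc x = a ^ i * x * u ^ (i + p) := by rw [hu, ← hn i]
    _ = x * u ^ p := by rw [pow_add, ← mul_assoc, ← hn i]

theorem rEquiv_mul_right_of_mInfix (hper : ∀ u : M, ∃ i p : ℕ, 0 < p ∧ u ^ (i + p) = u ^ i)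
    {x y : M} (h : MInfix (x * y) x) : REquiv x (x * y) := by
  obtain ⟨a, b, hab⟩ := h
  obtain ⟨i, p, hp, hu⟩ := hper (y * b)
  obtain ⟨q, rfl⟩ : ∃ q, p = q + 1 := ⟨p - 1, by omega⟩
  have hx := eq_mul_pow_of_eq_mul_mul (a := a) (hab.trans (by simp only [mul_assoc])) hu
  refine ⟨⟨y, rfl⟩, b * (y * b) ^ q, ?_⟩
  calc x = x * (y * b) ^ (q + 1) := hx
    _ = x * y * (b * (y * b) ^ q) := by rw [pow_succ']; simp only [mul_assoc]

theorem lEquiv_mul_left_of_mInfix (hper : ∀ u : M, ∃ i p : ℕ, 0 < p ∧ u ^ (i + p) = u ^ i)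
    {x y : M} (h : MInfix (x * y) y) : LEquiv y (x * y) := by
  have hper_op (u : Mᵐᵒᵖ) : ∃ i p : ℕ, 0 < p ∧ u ^ (i + p) = u ^ i := by
    obtain ⟨i, p, hp, hu⟩ := hper u.unop
    exact ⟨i, p, hp, unop_injective (by simpa using hu)⟩
  obtain ⟨a, b, hab⟩ := h
  have h_op : MInfix (op y * op x) (op y) :=
    ⟨op b, op a, unop_injective (by simpa [mul_assoc] using hab)⟩
  obtain ⟨-, c, hc⟩ := rEquiv_mul_right_of_mInfix hper_op h_op
  exact ⟨⟨x, rfl⟩, c.unop, by simpa [mul_assoc] using congrArg unop hc⟩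

end Green

/-- (Eggbox Lemma) In an orbit-finite monoid, if `x` and `x*y` are J-equivalent then they
are R-equivalent, and if `y` and `x*y` are J-equivalent then they are L-equivalent. -/
theorem eggbox {M : Type*} [Monoid M] [MulAction AtomPerm M]
    (hM : OrbitFiniteMonoid M) (x y : M) :
    (JEquiv x (x * y) → REquiv x (x * y)) ∧ (JEquiv y (x * y) → LEquiv y (x * y)) :=
  ⟨fun h => rEquiv_mul_right_of_mInfix hM.exists_pow_add_eq_pow h.2,
    fun h => lEquiv_mul_left_of_mInfix hM.exists_pow_add_eq_pow h.2⟩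
end

section
/- (Uniformisation) Let X and Y be polynomial orbit-finite sets and let R ⊆ X × Y be a finitely supported binary relation such that for every x ∈ X the set xR = {y : (x,y) ∈ R} is nonempty. Then R can be uniformised: there is a finitely supported function f : X → Y such that (x, f(x)) ∈ R for all x ∈ X. -/
/-- Codes for polynomial orbit-finite sets: built from the atoms and singleton sets
by finite products and coproducts. -/
inductive PolyCode : Type where
  | atom : PolyCode
  | unit : PolyCode
  | prod : PolyCode → PolyCode → PolyCode
  | sum : PolyCode → PolyCode → PolyCode

/-- The polynomial orbit-finite set described by a code. -/
def PolyCode.interp : PolyCode → Type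
  | .atom => Atom
  | .unit => Unit
  | .prod c d => c.interp × d.interp
  | .sum c d => c.interp ⊕ d.interp

/-- The componentwise action of atom automorphisms on a polynomial orbit-finite set. -/
def PolyCode.act (π : AtomPerm) : (c : PolyCode) → c.interp → c.interp
  | .atom, a => π a
  | .unit, u => u
  | .prod c d, p => (c.act π p.1, d.act π p.2)
  | .sum c d, x => x.elim (fun a => Sum.inl (c.act π a)) (fun b => Sum.inr (d.act π b))

theorem PolyCode.act_one : ∀ (c : PolyCode) (x : c.interp), c.act 1 x = x
  | .atom, a => rfl
  | .unit, _ => rfl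
  | .prod c d, p => by
      simp only [PolyCode.act, PolyCode.act_one c p.1, PolyCode.act_one d p.2, Prod.mk.eta]
      rfl
  | .sum c d, x => by
      cases x with
      | inl a => exact congrArg Sum.inl (PolyCode.act_one c a)
      | inr b => exact congrArg Sum.inr (PolyCode.act_one d b)

theorem PolyCode.act_mul (π σ : AtomPerm) :
    ∀ (c : PolyCode) (x : c.interp), c.act (π * σ) x = c.act π (c.act σ x)
  | .atom, a => rfl
  | .unit, _ => rfl
  | .prod c d, p => by
      simp only [PolyCode.act, PolyCode.act_mul π σ c p.1, PolyCode.act_mul π σ d p.2]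
      rfl
  | .sum c d, x => by
      cases x with
      | inl a => exact congrArg Sum.inl (PolyCode.act_mul π σ c a)
      | inr b => exact congrArg Sum.inr (PolyCode.act_mul π σ d b)

instance (c : PolyCode) : MulAction AtomPerm c.interp where
  smul π x := c.act π x
  one_smul x := c.act_one x
  mul_smul π σ x := c.act_mul π σ x

/-- `h : Σ* → M` is a monoid homomorphism from the free monoid of strings over `Σ`. -/
def IsListHom {X M : Type*} [Monoid M] (h : List X → M) : Prop :=
  h [] = 1 ∧ ∀ u v : List X, h (u ++ v) = h u * h v

/-- Equivariance of a function on strings, with the letterwise action on strings. -/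
def ListHomEquivariant {X M : Type*} [MulAction AtomPerm X] [Monoid M] [MulAction AtomPerm M]
    (h : List X → M) : Prop :=
  ∀ (π : AtomPerm) (l : List X), h (l.map fun x => π • x) = π • h l


/-!
Induct on the codomain `Y`. A product is uniformised one coordinate at a time, the second
relative to the uniformiser already chosen for the first. A coproduct is handled by deciding,
through the supported set of those `x` that have a witness in the left summand, which summand
to pick from. For `Y = 𝔸`, let `A` support `R`: if some witness for `x` lies outside `A` and
the atoms of `x`, then, swapping atoms, every such fresh atom is a witness. So the first witness
in the list `A, atoms x, 0, 1, …, N - 1` exists once `N` exceeds `|A| + |atoms x|`, and it is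
chosen equivariantly by every automorphism fixing `A` and `0, …, N - 1`.
-/

namespace PolyCode

/-- The atoms of `x`, as a list: unlike a finset, it has an order preserved by the action. -/
def atoms : (c : PolyCode) → c.interp → List Atom
  | .atom, a => [a]
  | .unit, _ => []
  | .prod c d, p => c.atoms p.1 ++ d.atoms p.2
  | .sum c d, x => x.elim c.atoms d.atoms

theorem atoms_smul (π : AtomPerm) :
    ∀ (c : PolyCode) (x : c.interp), c.atoms (π • x) = (c.atoms x).map π
  | .atom, _ => rfl
  | .unit, _ => rfl
  | .prod c d, p => by
      change c.atoms (π • p.1) ++ d.atoms (π • p.2) = (c.atoms p.1 ++ d.atoms p.2).map π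
      rw [atoms_smul π c, atoms_smul π d, List.map_append]
  | .sum c _, .inl x => atoms_smul π c x
  | .sum _ d, .inr y => atoms_smul π d y

theorem supportedBy_atoms : ∀ (c : PolyCode) (x : c.interp), SupportedBy (c.atoms x).toFinset x
  | .atom, a, _, h => h a (List.mem_toFinset.2 (List.mem_singleton_self a))
  | .unit, _, _, _ => rfl
  | .prod c d, p, π, h => Prod.ext
      (supportedBy_atoms c p.1 π fun a ha => h a (by simp_all [atoms]))
      (supportedBy_atoms d p.2 π fun a ha => h a (by simp_all [atoms]))
  | .sum c _, .inl x, π, h => congrArg Sum.inl (supportedBy_atoms c x π h)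
  | .sum _ d, .inr y, π, h => congrArg Sum.inr (supportedBy_atoms d y π h)

def width : PolyCode → ℕ
  | .atom => 1
  | .unit => 0
  | .prod c d => c.width + d.width
  | .sum c d => max c.width d.width

theorem length_atoms_le : ∀ (c : PolyCode) (x : c.interp), (c.atoms x).length ≤ c.width
  | .atom, _ => le_rfl
  | .unit, _ => le_rfl
  | .prod c d, p => by
      simpa only [atoms, width, List.length_append] using
        Nat.add_le_add (length_atoms_le c p.1) (length_atoms_le d p.2)
  | .sum c _, .inl x => (length_atoms_le c x).trans (le_max_left _ _)
  | .sum _ d, .inr y => (length_atoms_le d y).trans (le_max_right _ _)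

instance instNonemptyInterp : ∀ c : PolyCode, Nonempty c.interp
  | .atom => ⟨(0 : Atom)⟩
  | .unit => ⟨()⟩
  | .prod c d =>
      have := instNonemptyInterp c
      have := instNonemptyInterp d
      inferInstanceAs (Nonempty (c.interp × d.interp))
  | .sum c _ =>
      have := instNonemptyInterp c
      inferInstanceAs (Nonempty (c.interp ⊕ _))

end PolyCode

theorem Equiv.Perm.inv_apply_eq_of_forall_mem {A : Finset Atom} {π : AtomPerm}
    (hπ : ∀ a ∈ A, π a = a) : ∀ a ∈ A, π⁻¹ a = a :=
  fun a ha => Equiv.Perm.inv_eq_iff_eq.2 (hπ a ha).symm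

section Supports

variable {X Y : Type*} [MulAction AtomPerm X] [MulAction AtomPerm Y]

theorem SetSupportedBy.of_forall_smul_mem {A : Finset Atom} {S : Set X}
    (h : ∀ π : AtomPerm, (∀ a ∈ A, π a = a) → ∀ x ∈ S, π • x ∈ S) :
    SetSupportedBy A S := by
  intro π hπ x
  refine ⟨h π hπ x, fun hx => ?_⟩
  simpa using h π⁻¹ (Equiv.Perm.inv_apply_eq_of_forall_mem hπ) _ hx

theorem SetSupportedBy.mem_of_swap {A : Finset Atom} {R : Set (X × Atom)}
    (hR : SetSupportedBy A R) {a b : Atom} (ha : a ∉ A) (hb : b ∉ A) {x : X}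
    (hx : Equiv.swap a b • x = x) (h : (x, a) ∈ R) : (x, b) ∈ R := by
  have hfix : ∀ c ∈ A, Equiv.swap a b c = c := fun c hc =>
    Equiv.swap_apply_of_ne_of_ne (ne_of_mem_of_not_mem hc ha) (ne_of_mem_of_not_mem hc hb)
  simpa [hx] using (hR _ hfix (x, a)).1 h

theorem SetSupportedBy.exists_mem_of_card_lt
    {A S : Finset Atom} {R : Set (X × Atom)} (hR : SetSupportedBy A R) {x : X}
    (hx : SupportedBy S x) {N : ℕ} (hN : A.card + S.card < N) {y : Atom} (hy : (x, y) ∈ R) :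
    ∃ a, (a ∈ A ∨ a ∈ S ∨ a < N) ∧ (x, a) ∈ R := by
  by_cases hyAS : y ∈ A ∨ y ∈ S
  · exact ⟨y, by tauto, hy⟩
  have hcard : (A ∪ S).card < (Finset.range N).card :=
    (Finset.card_union_le A S).trans_lt (by simpa using hN)
  obtain ⟨b, hbN, hbAS⟩ := Finset.exists_mem_notMem_of_card_lt_card hcard
  simp only [Finset.mem_union, not_or] at hyAS hbAS
  refine ⟨b, Or.inr (Or.inr (Finset.mem_range.1 hbN)), hR.mem_of_swap hyAS.1 hbAS.1 ?_ hy⟩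
  exact hx _ fun a ha =>
    Equiv.swap_apply_of_ne_of_ne (ne_of_mem_of_not_mem ha hyAS.2) (ne_of_mem_of_not_mem ha hbAS.2)

theorem FunSupportedBy.mono {A B : Finset Atom} {f : X → Y} (hf : FunSupportedBy A f)
    (hAB : A ⊆ B) : FunSupportedBy B f :=
  fun π hπ => hf π fun a ha => hπ a (hAB ha)

end Supports

def Uniformisable (X Y : Type*) [MulAction AtomPerm X] [MulAction AtomPerm Y] : Prop :=
  ∀ (R : Set (X × Y)) (A : Finset Atom), SetSupportedBy A R → (∀ x, ∃ y, (x, y) ∈ R) →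
    ∃ f : X → Y, (∃ B : Finset Atom, FunSupportedBy B f) ∧ ∀ x, (x, f x) ∈ R

namespace Uniformisable

variable {X Y Z : Type*} [MulAction AtomPerm X] [MulAction AtomPerm Y] [MulAction AtomPerm Z]

theorem of_subsingleton [Subsingleton Y] : Uniformisable X Y := fun _ _ _ hne =>
  ⟨fun x => (hne x).choose, ⟨∅, fun _ _ _ => Subsingleton.elim _ _⟩,
    fun x => (hne x).choose_spec⟩

theorem prod (hY : Uniformisable X Y) (hZ : Uniformisable X Z) : Uniformisable X (Y × Z) := by
  intro R A hR hne
  have hRY : SetSupportedBy A {p : X × Y | ∃ z, (p.1, (p.2, z)) ∈ R} :=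
    .of_forall_smul_mem fun π hπ _ ⟨z, hz⟩ => ⟨π • z, hR π hπ _ |>.1 hz⟩
  obtain ⟨g, ⟨B, hg⟩, hgR⟩ := hY _ A hRY fun x =>
    let ⟨⟨y, z⟩, h⟩ := hne x; ⟨y, z, h⟩
  have hRZ : SetSupportedBy (A ∪ B) {p : X × Z | (p.1, (g p.1, p.2)) ∈ R} :=
    .of_forall_smul_mem fun π hπ p hp => by
      have := hR π (fun a ha => hπ a (Finset.mem_union_left _ ha)) _ |>.1 hp
      simpa [hg π (fun a ha => hπ a (Finset.mem_union_right _ ha))] using this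
  obtain ⟨h, ⟨C, hh⟩, hhR⟩ := hZ _ _ hRZ hgR
  refine ⟨fun x => (g x, h x), ⟨B ∪ C, fun π hπ x => ?_⟩, hhR⟩
  change (g (π • x), h (π • x)) = π • (g x, h x)
  rw [hg.mono Finset.subset_union_left π hπ, hh.mono Finset.subset_union_right π hπ,
    Prod.smul_mk]

theorem sum [Nonempty Y] [Nonempty Z] (hY : Uniformisable X Y) (hZ : Uniformisable X Z) :
    Uniformisable X (Y ⊕ Z) := by
  classical
  intro R A hR hne
  set P : Set X := {x | ∃ y, (x, Sum.inl y) ∈ R}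
  have hP : SetSupportedBy A P :=
    .of_forall_smul_mem fun π hπ _ ⟨y, hy⟩ => ⟨π • y, hR π hπ _ |>.1 hy⟩
  have hRY : SetSupportedBy A {p : X × Y | (p.1, Sum.inl p.2) ∈ R ∨ p.1 ∉ P} :=
    .of_forall_smul_mem fun π hπ p hp => hp.imp (hR π hπ _).1 (mt (hP π hπ p.1).2)
  have hRZ : SetSupportedBy A {p : X × Z | (p.1, Sum.inr p.2) ∈ R ∨ p.1 ∈ P} :=
    .of_forall_smul_mem fun π hπ p hp => hp.imp (hR π hπ _).1 (hP π hπ p.1).1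
  obtain ⟨g, ⟨B, hg⟩, hgR⟩ := hY _ A hRY fun x => by
    by_cases hx : x ∈ P
    · exact hx.imp fun _ => Or.inl
    · exact ⟨Classical.arbitrary Y, Or.inr hx⟩
  obtain ⟨h, ⟨C, hh⟩, hhR⟩ := hZ _ A hRZ fun x => by
    by_cases hx : x ∈ P
    · exact ⟨Classical.arbitrary Z, Or.inr hx⟩
    · obtain ⟨y | z, hyz⟩ := hne x
      exacts [absurd ⟨y, hyz⟩ hx, ⟨z, Or.inl hyz⟩]
  refine ⟨fun x => if x ∈ P then .inl (g x) else .inr (h x),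
    ⟨A ∪ B ∪ C, fun π hπ x => ?_⟩, fun x => ?_⟩
  · have hPx := hP π (fun a ha => hπ a (by simp [ha])) x
    by_cases hx : x ∈ P
    · simp [hx, hPx.1 hx, hg π (fun a ha => hπ a (by simp [ha]))]
    · simp [hx, mt hPx.2 hx, hh π (fun a ha => hπ a (by simp [ha]))]
  · by_cases hx : x ∈ P
    · simpa [hx] using hgR x
    · simpa [hx] using hhR x

end Uniformisable

theorem uniformisable_atom {X : Type*} [MulAction AtomPerm X] (atoms : X → List Atom) (n : ℕ)
    (atoms_smul : ∀ (π : AtomPerm) (x : X), atoms (π • x) = (atoms x).map π)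
    (supportedBy_atoms : ∀ x, SupportedBy (atoms x).toFinset x)
    (length_atoms_le : ∀ x, (atoms x).length ≤ n) : Uniformisable X Atom := by
  classical
  intro R A hR hne
  set N := A.card + n + 1
  set L : X → List Atom := fun x => A.sort (· ≤ ·) ++ atoms x ++ List.range N
  have exists_mem_L : ∀ x, ∃ a ∈ L x, (x, a) ∈ R := by
    intro x
    obtain ⟨y, hy⟩ := hne x
    have hN : A.card + (atoms x).toFinset.card < N := by
      grw [List.toFinset_card_le, length_atoms_le]
      omega
    obtain ⟨a, ha, hxa⟩ := hR.exists_mem_of_card_lt (supportedBy_atoms x) hN hy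
    exact ⟨a, by simpa [L, or_assoc] using ha, hxa⟩
  have L_smul : ∀ π : AtomPerm, (∀ a ∈ A ∪ Finset.range N, π a = a) →
      ∀ x, L (π • x) = (L x).map π := by
    intro π hπ x
    have map_eq_self :
        ∀ l : List Atom, (∀ a ∈ l, a ∈ A ∪ Finset.range N) → l.map π = l :=
      fun l hl => (List.map_congr_left fun a ha => hπ a (hl a ha)).trans (List.map_id _)
    simp only [L, atoms_smul, List.map_append]
    rw [map_eq_self (A.sort _) fun a ha => by simp_all,
      map_eq_self (List.range N) fun a ha => by simp_all]
  refine ⟨fun x => ((L x).find? fun a => (x, a) ∈ R).getD 0,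
    ⟨A ∪ Finset.range N, fun π hπ x => ?_⟩, fun x => ?_⟩
  · have hπA : ∀ a ∈ A, π a = a := fun a ha => hπ a (Finset.mem_union_left _ ha)
    change ((L (π • x)).find? fun a => (π • x, a) ∈ R).getD 0 =
      π (((L x).find? fun a => (x, a) ∈ R).getD 0)
    -- the default `0` lies in `range N`, so it is fixed by `π`
    rw [L_smul π hπ x, List.find?_map, ← Option.getD_map π, hπ 0 (by simp [N])]
    congr 3
    funext a
    simpa using (hR π hπA (x, a)).symm
  · obtain ⟨a, ha, hxa⟩ := exists_mem_L x
    obtain ⟨b, hb⟩ : ∃ b, (L x).find? (fun a => (x, a) ∈ R) = some b :=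
      Option.isSome_iff_exists.1 (List.find?_isSome.2 ⟨a, ha, by simpa using hxa⟩)
    simpa [hb] using List.find?_some hb

theorem PolyCode.uniformisable (cX : PolyCode) :
    ∀ cY : PolyCode, Uniformisable cX.interp cY.interp
  | .atom => uniformisable_atom cX.atoms cX.width (atoms_smul · cX)
      cX.supportedBy_atoms cX.length_atoms_le
  | .unit => have : Subsingleton unit.interp := inferInstanceAs (Subsingleton Unit)
      .of_subsingleton
  | .prod c d => (cX.uniformisable c).prod (cX.uniformisable d)
  | .sum c d => (cX.uniformisable c).sum (cX.uniformisable d)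

/-- (Uniformisation) Let `X` and `Y` be polynomial orbit-finite sets and `R ⊆ X × Y` a
finitely supported relation all of whose sections are nonempty. Then `R` can be
uniformised by a finitely supported function. -/
theorem uniformisation (cX cY : PolyCode)
    (R : Set (cX.interp × cY.interp))
    (hSupp : ∃ A : Finset Atom, SetSupportedBy A R)
    (hNE : ∀ x : cX.interp, ∃ y : cY.interp, (x, y) ∈ R) :
    ∃ f : cX.interp → cY.interp,
      (∃ A : Finset Atom, FunSupportedBy A f) ∧ ∀ x : cX.interp, (x, f x) ∈ R := by
  obtain ⟨A, hA⟩ := hSupp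
  exact cX.uniformisable cY R A hA hNE
end
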